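/- Let Y be an ℝ^d-valued random variable whose law is absolutely continuous with respect to Lebesgue measure, Y_n = Y + (1/n)θ(nY), and ψ ∈ L¹([−1/2,1/2]^d). Then for any random variable X, (X, ψ(n(Y_n - Y))) converges in distribution to (X, ψ(V)) where V is uniform on (−1/2,1/2)^d independent of X. -/

import Mathlib

open MeasureTheory Filter

/-- Componentwise rounding error function: `θ(y)_i = 1/2 − {yᵢ}`. -/
noncomputable def roundTheta {d : ℕ} (y : Fin d → ℝ) : Fin d → ℝ :=
  fun i => 1 / 2 - Int.fract (y i)

/-!
On the grid cell `∏ᵢ [kᵢ/n, (kᵢ+1)/n)` the map `y ↦ θ(ny)` is the affine bijection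
`y ↦ k + 1/2 - ny` onto the cube `(-1/2, 1/2]^d`, so `∫ φ(y) g(θ(ny)) dy = (∫ φ) (∫_cube g)`
holds exactly whenever `φ` is constant on the cells. A continuous compactly supported `φ` is
`L¹`-close to its values at the grid points, and such functions are dense in `L¹`; since the
error is controlled by `2 sup |g| ‖φ‖₁`, the identity holds in the limit `n → ∞` for every
`φ ∈ L¹` and every bounded measurable `g`. Taking for `φ` the density of the law of `Y` restricted
to an event gives the asymptotic independence of `θ(nY)` from every event; summing over the fibres
of a simple function and approximating `X` by simple functions extends this to test functions
`H(X, ψ(θ(nY)))` with `H` bounded and Lipschitz, which suffices for convergence in law.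
-/

open Set Topology
open scoped NNReal

lemma tendsto_of_forall_approx {α : Type*} [PseudoMetricSpace α] {a : ℕ → α} {A : α}
    {b : ℕ → ℕ → α} {B : ℕ → α} {e : ℕ → ℝ} (he : Tendsto e atTop (𝓝 0))
    (hb : ∀ j, Tendsto (b j) atTop (𝓝 (B j))) (hab : ∀ j n, dist (a n) (b j n) ≤ e j)
    (hAB : ∀ j, dist A (B j) ≤ e j) : Tendsto a atTop (𝓝 A) := by
  refine TendstoUniformly.tendsto_of_eventually_tendsto (p := atTop) (F := b) ?_
    (Eventually.of_forall hb) ?_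
  · refine Metric.tendstoUniformly_iff.2 fun ε hε => ?_
    filter_upwards [he.eventually (gt_mem_nhds hε)] with j hj n
    exact (hab j n).trans_lt hj
  · refine tendsto_iff_dist_tendsto_zero.2 (squeeze_zero (fun _ => dist_nonneg) (fun j => ?_) he)
    rw [dist_comm]
    exact hAB j

lemma integral_eq_tsum_setIntegral_fiber {α ι : Type*} [MeasurableSpace α] [MeasurableSpace ι]
    [MeasurableSingletonClass ι] [Countable ι] {μ : Measure α} {q : α → ι} (hq : Measurable q)
    {f : α → ℝ} (hf : Integrable f μ) :
    ∫ x, f x ∂μ = ∑' k, ∫ x in q ⁻¹' {k}, f x ∂μ := by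
  rw [← integral_iUnion (fun k => hq (measurableSet_singleton k)) (pairwise_disjoint_fiber q)
    hf.integrableOn, ← preimage_iUnion, iUnion_of_singleton, preimage_univ, setIntegral_univ]

lemma MeasureTheory.SimpleFunc.integral_eq_sum_setIntegral_fiber {α β : Type*} [MeasurableSpace α]
    {μ : Measure α} (s : SimpleFunc α β) {h : β → α → ℝ} (hh : Integrable (fun x => h (s x) x) μ) :
    ∫ x, h (s x) x ∂μ = ∑ c ∈ s.range, ∫ x in s ⁻¹' {c}, h c x ∂μ := by
  have hcover : ⋃ c ∈ s.range, s ⁻¹' {c} = univ := by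
    rw [Finset.set_biUnion_preimage_singleton, SimpleFunc.coe_range, preimage_range]
  rw [← setIntegral_univ, ← hcover, integral_biUnion_finset _ (fun c _ => s.measurableSet_fiber c)
    ((pairwise_disjoint_fiber s).set_pairwise _) fun c _ => hh.integrableOn]
  refine Finset.sum_congr rfl fun c _ =>
    setIntegral_congr_fun (s.measurableSet_fiber c) fun x hx => ?_
  rw [(hx : s x = c)]

lemma abs_le_indicator_cthickening_tsupport {X : Type*} [PseudoMetricSpace X] {φ : X → ℝ} {C : ℝ}
    (hC : ∀ x, |φ x| ≤ C) {y z : X} (hyz : dist y z ≤ 1) :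
    |φ z| ≤ (Metric.cthickening 1 (tsupport φ)).indicator (fun _ => C) y := by
  by_cases hz : φ z = 0
  · rw [hz, abs_zero]
    exact indicator_nonneg (fun _ _ => (abs_nonneg _).trans (hC z)) y
  · rw [indicator_of_mem (Metric.mem_cthickening_of_dist_le y z 1 _ (subset_tsupport φ hz) hyz)]
    exact hC z

lemma integrable_indicator_cthickening_tsupport {X : Type*} [PseudoMetricSpace X] [ProperSpace X]
    [MeasurableSpace X] [OpensMeasurableSpace X] {μ : Measure X} [IsFiniteMeasureOnCompacts μ]
    {φ : X → ℝ} (hφs : HasCompactSupport φ) (C : ℝ) :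
    Integrable ((Metric.cthickening 1 (tsupport φ)).indicator fun _ => C) μ := by
  have hK : IsCompact (Metric.cthickening 1 (tsupport φ)) := hφs.cthickening
  exact (integrableOn_const hK.measure_lt_top.ne).integrable_indicator
    Metric.isClosed_cthickening.measurableSet

lemma tendsto_integral_min_dist_approxOn {Ω E : Type*} [MeasurableSpace Ω] {P : Measure Ω}
    [IsFiniteMeasure P] [PseudoMetricSpace E] [MeasurableSpace E] [BorelSpace E]
    [SecondCountableTopology E] {X : Ω → E} (hX : Measurable X) (x₀ : E) {C : ℝ} (hC : 0 ≤ C)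
    (L : ℝ≥0) :
    Tendsto (fun j => ∫ ω, min C (L * dist (X ω)
      (SimpleFunc.approxOn X hX univ x₀ (mem_univ _) j ω)) ∂P) atTop (𝓝 0) := by
  set s := SimpleFunc.approxOn X hX univ x₀ (mem_univ _)
  have hlim : ∀ ω, Tendsto (fun j => min C (L * dist (X ω) (s j ω))) atTop (𝓝 0) := fun ω => by
    have hdist := ((tendsto_const_nhds (x := X ω)).dist
      (SimpleFunc.tendsto_approxOn hX (mem_univ x₀) (x := ω) (by simp))).const_mul (L : ℝ)
    simpa [min_eq_right hC] using (tendsto_const_nhds (x := C)).min hdist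
  simpa using tendsto_integral_of_dominated_convergence (μ := P) (f := fun _ => 0) (fun _ => C)
    (fun j => (measurable_const.min
      ((hX.dist (s j).measurable).const_mul (L : ℝ))).aestronglyMeasurable)
    (integrable_const C)
    (fun j => Eventually.of_forall fun ω => by
      rw [Real.norm_eq_abs, abs_of_nonneg (le_min hC (by positivity))]
      exact min_le_left _ _)
    (Eventually.of_forall hlim)

section Cells

variable {d : ℕ}

def centeredCube (d : ℕ) : Set (Fin d → ℝ) := univ.pi fun _ => Ioo (-(1 / 2) : ℝ) (1 / 2)

lemma volume_centeredCube : volume (centeredCube d) = 1 := by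
  simp [centeredCube, volume_pi_pi, Real.volume_Ioo]
  norm_num

lemma volume_real_centeredCube : volume.real (centeredCube d) = 1 := by
  simp [measureReal_def, volume_centeredCube]

instance isProbabilityMeasure_restrict_centeredCube :
    IsProbabilityMeasure (volume.restrict (centeredCube d)) :=
  ⟨by rw [Measure.restrict_apply_univ, volume_centeredCube]⟩

@[fun_prop]
lemma measurable_roundTheta : Measurable (roundTheta : (Fin d → ℝ) → Fin d → ℝ) :=
  measurable_pi_lambda _ fun i =>
    measurable_const.sub (measurable_fract.comp (measurable_pi_apply i))

noncomputable def cellIndex (n : ℕ) (y : Fin d → ℝ) : Fin d → ℤ := fun i => ⌊(n : ℝ) * y i⌋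

@[fun_prop]
lemma measurable_cellIndex (n : ℕ) : Measurable (cellIndex (d := d) n) :=
  measurable_pi_lambda _ fun i =>
    Int.measurable_floor.comp (measurable_const.mul (measurable_pi_apply i))

lemma roundTheta_smul (n : ℕ) (y : Fin d → ℝ) :
    roundTheta ((n : ℝ) • y) = (fun i => 1 / 2 + (cellIndex n y i : ℝ)) - (n : ℝ) • y := by
  ext i
  simp only [roundTheta, cellIndex, Int.fract, Pi.smul_apply, smul_eq_mul, Pi.sub_apply]
  ring

lemma cellIndex_eq_iff {n : ℕ} {y : Fin d → ℝ} {k : Fin d → ℤ} :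
    cellIndex n y = k ↔
      (fun i => 1 / 2 + (k i : ℝ)) - (n : ℝ) • y ∈ univ.pi fun _ => Ioc (-(1 / 2) : ℝ) (1 / 2) := by
  simp only [funext_iff, cellIndex, Int.floor_eq_iff, mem_univ_pi, mem_Ioc, Pi.sub_apply,
    Pi.smul_apply, smul_eq_mul]
  refine forall_congr' fun i => ?_
  constructor <;> rintro ⟨h₁, h₂⟩ <;> constructor <;> linarith

lemma setIntegral_cell (n : ℕ) (k : Fin d → ℤ) (g : (Fin d → ℝ) → ℝ) :
    ∫ y in cellIndex n ⁻¹' {k}, g (roundTheta ((n : ℝ) • y)) =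
      ((n : ℝ) ^ d)⁻¹ * ∫ v in centeredCube d, g v := by
  set Q : Set (Fin d → ℝ) := univ.pi fun _ => Ioc (-(1 / 2) : ℝ) (1 / 2)
  set c : Fin d → ℝ := fun i => 1 / 2 + (k i : ℝ)
  have hindicator : (cellIndex n ⁻¹' {k}).indicator (fun y => g (roundTheta ((n : ℝ) • y))) =
      fun y => Q.indicator g (c + (-(n : ℝ)) • y) := by
    ext y
    have hmem : y ∈ cellIndex n ⁻¹' {k} ↔ c + (-(n : ℝ)) • y ∈ Q := by
      rw [mem_preimage, mem_singleton_iff, cellIndex_eq_iff, neg_smul, ← sub_eq_add_neg]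
    by_cases hy : y ∈ cellIndex n ⁻¹' {k}
    · rw [indicator_of_mem hy, indicator_of_mem (hmem.1 hy), roundTheta_smul,
        (mem_preimage.1 hy : cellIndex n y = k), neg_smul, ← sub_eq_add_neg]
    · rw [indicator_of_notMem hy, indicator_of_notMem (mt hmem.2 hy)]
  rw [← integral_indicator (measurable_cellIndex n (measurableSet_singleton k)), hindicator,
    Measure.integral_comp_smul volume (fun x => Q.indicator g (c + x)),
    integral_add_left_eq_self (Q.indicator g) c,
    integral_indicator (MeasurableSet.univ_pi fun _ => measurableSet_Ioc), Module.finrank_fin_fun,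
    abs_inv, abs_pow, abs_neg, Nat.abs_cast, smul_eq_mul]
  exact congrArg _ (setIntegral_congr_set (Measure.pi_Ioo_ae_eq_pi_Ioc (μ := fun _ => volume)).symm)

lemma abs_setIntegral_centeredCube_le {g : (Fin d → ℝ) → ℝ} {M : ℝ} (hgM : ∀ v, |g v| ≤ M) :
    |∫ v in centeredCube d, g v| ≤ M := by
  have h := norm_setIntegral_le_of_norm_le_const (μ := volume) (f := g)
    (volume_centeredCube (d := d) ▸ ENNReal.one_lt_top) fun v _ => (hgM v :)
  rwa [volume_real_centeredCube, mul_one] at h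

noncomputable def gridPoint (n : ℕ) (y : Fin d → ℝ) : Fin d → ℝ :=
  fun i => (cellIndex n y i : ℝ) / n

lemma dist_gridPoint_le {n : ℕ} (hn : n ≠ 0) (y : Fin d → ℝ) : dist y (gridPoint n y) ≤ 1 / n := by
  refine (dist_pi_le_iff (by positivity)).2 fun i => ?_
  have hfract : y i - gridPoint n y i = Int.fract ((n : ℝ) * y i) / n := by
    simp only [gridPoint, cellIndex, Int.fract]
    field_simp
  rw [Real.dist_eq, hfract, abs_of_nonneg (by positivity)]
  gcongr
  exact (Int.fract_lt_one _).le

lemma dist_gridPoint_le_one {n : ℕ} (hn : n ≠ 0) (y : Fin d → ℝ) : dist y (gridPoint n y) ≤ 1 :=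
  (dist_gridPoint_le hn y).trans <| by
    rw [div_le_one (by positivity)]
    exact_mod_cast Nat.one_le_iff_ne_zero.2 hn

@[fun_prop]
lemma measurable_gridPoint (n : ℕ) : Measurable (gridPoint (d := d) n) :=
  measurable_pi_lambda _ fun i =>
    (measurable_from_top.comp ((measurable_pi_apply i).comp (measurable_cellIndex n))).div_const _

lemma tendsto_gridPoint (y : Fin d → ℝ) : Tendsto (fun n => gridPoint n y) atTop (𝓝 y) := by
  refine tendsto_iff_dist_tendsto_zero.2 <|
    squeeze_zero' (Eventually.of_forall fun _ => dist_nonneg) ?_ tendsto_one_div_atTop_nhds_zero_nat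
  filter_upwards [eventually_ne_atTop 0] with n hn
  rw [dist_comm]
  exact dist_gridPoint_le hn y

lemma integrable_comp_gridPoint {φ : (Fin d → ℝ) → ℝ} (hφc : Continuous φ)
    (hφs : HasCompactSupport φ) {n : ℕ} (hn : n ≠ 0) : Integrable fun y => φ (gridPoint n y) := by
  obtain ⟨C, hC⟩ := hφc.bounded_above_of_compact_support hφs
  exact (integrable_indicator_cthickening_tsupport hφs C).mono'
    (hφc.measurable.comp (measurable_gridPoint n)).aestronglyMeasurable
    (Eventually.of_forall fun y =>
      abs_le_indicator_cthickening_tsupport hC (dist_gridPoint_le_one hn y))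

lemma tendsto_integral_abs_sub_comp_gridPoint {φ : (Fin d → ℝ) → ℝ} (hφc : Continuous φ)
    (hφs : HasCompactSupport φ) :
    Tendsto (fun n => ∫ y, |φ y - φ (gridPoint n y)|) atTop (𝓝 0) := by
  obtain ⟨C, hC⟩ := hφc.bounded_above_of_compact_support hφs
  set bound := (Metric.cthickening 1 (tsupport φ)).indicator fun _ => C
  have hlim : ∀ y, Tendsto (fun n => |φ y - φ (gridPoint n y)|) atTop (𝓝 0) := fun y => by
    simpa using
      ((tendsto_const_nhds (x := φ y)).sub ((hφc.tendsto y).comp (tendsto_gridPoint y))).abs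
  simpa using tendsto_integral_filter_of_dominated_convergence (fun y => 2 * bound y)
    (Eventually.of_forall fun n => by fun_prop)
    ((eventually_ne_atTop 0).mono fun n hn => Eventually.of_forall fun y => by
      rw [Real.norm_eq_abs, abs_abs, two_mul]
      exact (abs_sub _ _).trans (add_le_add
        (abs_le_indicator_cthickening_tsupport hC (by simp))
        (abs_le_indicator_cthickening_tsupport hC (dist_gridPoint_le_one hn y))))
    ((integrable_indicator_cthickening_tsupport hφs C).const_mul 2) (Eventually.of_forall hlim)

end Cells

section Equidistribution

variable {d : ℕ} {g : (Fin d → ℝ) → ℝ} {M : ℝ}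

lemma integrable_mul_comp_roundTheta {φ : (Fin d → ℝ) → ℝ} (hφ : Integrable φ) (hg : Measurable g)
    (hgM : ∀ v, |g v| ≤ M) (n : ℕ) : Integrable fun y => φ y * g (roundTheta ((n : ℝ) • y)) :=
  hφ.mul_bdd (by fun_prop : Measurable _).aestronglyMeasurable (Eventually.of_forall fun _ => hgM _)

noncomputable def equidistDefect (g : (Fin d → ℝ) → ℝ) (n : ℕ) (φ : (Fin d → ℝ) → ℝ) : ℝ :=
  (∫ y, φ y * g (roundTheta ((n : ℝ) • y))) - (∫ y, φ y) * ∫ v in centeredCube d, g v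

lemma equidistDefect_sub (hg : Measurable g) (hgM : ∀ v, |g v| ≤ M) {φ φ' : (Fin d → ℝ) → ℝ}
    (hφ : Integrable φ) (hφ' : Integrable φ') (n : ℕ) :
    equidistDefect g n (fun y => φ y - φ' y) = equidistDefect g n φ - equidistDefect g n φ' := by
  simp only [equidistDefect, sub_mul]
  rw [integral_sub (integrable_mul_comp_roundTheta hφ hg hgM n)
    (integrable_mul_comp_roundTheta hφ' hg hgM n), integral_sub hφ hφ']
  ring

lemma abs_equidistDefect_le (hgM : ∀ v, |g v| ≤ M) {φ : (Fin d → ℝ) → ℝ} (hφ : Integrable φ)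
    (n : ℕ) :
    |equidistDefect g n φ| ≤ 2 * M * ∫ y, |φ y| := by
  have h₁ : |∫ y, φ y * g (roundTheta ((n : ℝ) • y))| ≤ (∫ y, |φ y|) * M := by
    rw [← integral_mul_const]
    refine norm_integral_le_of_norm_le (f := fun y => φ y * g (roundTheta ((n : ℝ) • y)))
      (hφ.abs.mul_const M) (Eventually.of_forall fun y => ?_)
    rw [Real.norm_eq_abs, abs_mul]
    exact mul_le_mul_of_nonneg_left (hgM _) (abs_nonneg _)
  have h₂ : |(∫ y, φ y) * ∫ v in centeredCube d, g v| ≤ (∫ y, |φ y|) * M := by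
    rw [abs_mul]
    exact mul_le_mul abs_integral_le_integral_abs (abs_setIntegral_centeredCube_le hgM)
      (abs_nonneg _) (integral_nonneg fun _ => abs_nonneg _)
  calc |equidistDefect g n φ| ≤ _ + _ := abs_sub _ _
    _ ≤ 2 * M * ∫ y, |φ y| := by linarith

lemma equidistDefect_comp_cellIndex (hg : Measurable g) (hgM : ∀ v, |g v| ≤ M) (n : ℕ)
    (a : (Fin d → ℤ) → ℝ) (ha : Integrable fun y => a (cellIndex n y)) :
    equidistDefect g n (fun y => a (cellIndex n y)) = 0 := by
  rw [equidistDefect, sub_eq_zero,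
    integral_eq_tsum_setIntegral_fiber (measurable_cellIndex n)
      (integrable_mul_comp_roundTheta ha hg hgM n),
    integral_eq_tsum_setIntegral_fiber (measurable_cellIndex n) ha, ← tsum_mul_right]
  congr 1 with k
  have hcell := measurable_cellIndex (d := d) n (measurableSet_singleton k)
  have hconst : ∀ f : (Fin d → ℝ) → ℝ, ∫ y in cellIndex n ⁻¹' {k}, a (cellIndex n y) * f y =
      a k * ∫ y in cellIndex n ⁻¹' {k}, f y := fun f => by
    rw [← integral_const_mul]
    exact setIntegral_congr_fun hcell fun y hy => by rw [(hy : cellIndex n y = k)]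
  have hone := hconst fun _ => 1
  simp only [mul_one] at hone
  rw [hconst, hone, setIntegral_cell n k g, setIntegral_cell n k fun _ => 1, setIntegral_const,
    volume_real_centeredCube]
  simp only [smul_eq_mul]
  ring

lemma tendsto_equidistDefect_of_hasCompactSupport (hg : Measurable g) (hgM : ∀ v, |g v| ≤ M)
    {φ : (Fin d → ℝ) → ℝ} (hφc : Continuous φ) (hφs : HasCompactSupport φ) :
    Tendsto (fun n => equidistDefect g n φ) atTop (𝓝 0) := by
  have hint := fun n (hn : n ≠ 0) => integrable_comp_gridPoint hφc hφs hn
  have hφ := hφc.integrable_of_hasCompactSupport (μ := volume) hφs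
  refine squeeze_zero_norm' ?_
    (by simpa using (tendsto_integral_abs_sub_comp_gridPoint hφc hφs).const_mul (2 * M))
  filter_upwards [eventually_ne_atTop 0] with n hn
  have hstep : equidistDefect g n (fun y => φ (gridPoint n y)) = 0 :=
    equidistDefect_comp_cellIndex hg hgM n (fun k => φ fun i => (k i : ℝ) / n) (hint n hn)
  rw [Real.norm_eq_abs, ← sub_zero (equidistDefect g n φ), ← hstep,
    ← equidistDefect_sub hg hgM hφ (hint n hn)]
  exact abs_equidistDefect_le hgM (hφ.sub (hint n hn)) n

lemma tendsto_equidistDefect (hg : Measurable g) (hgM : ∀ v, |g v| ≤ M) {φ : (Fin d → ℝ) → ℝ}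
    (hφ : Integrable φ) : Tendsto (fun n => equidistDefect g n φ) atTop (𝓝 0) := by
  have hM : 0 ≤ M := (abs_nonneg _).trans (hgM 0)
  have happrox : ∀ j : ℕ, ∃ φ', HasCompactSupport φ' ∧ ∫ y, ‖φ y - φ' y‖ ≤ 1 / (j + 1) ∧
      Continuous φ' ∧ Integrable φ' := fun j =>
    hφ.exists_hasCompactSupport_integral_sub_le (by positivity)
  choose φ' hφ's hφ'near hφ'c hφ'int using happrox
  refine tendsto_of_forall_approx (b := fun j n => equidistDefect g n (φ' j)) (B := fun _ => 0)
    (e := fun j => 2 * M * (1 / (j + 1))) ?_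
    (fun j => tendsto_equidistDefect_of_hasCompactSupport hg hgM (hφ'c j) (hφ's j)) ?_ ?_
  · simpa using tendsto_one_div_add_atTop_nhds_zero_nat.const_mul (2 * M)
  · intro j n
    rw [Real.dist_eq, ← equidistDefect_sub hg hgM hφ (hφ'int j)]
    refine (abs_equidistDefect_le hgM (hφ.sub (hφ'int j)) n).trans ?_
    simp only [Real.norm_eq_abs] at hφ'near
    gcongr
    exact hφ'near j
  · intro j
    rw [dist_self]
    positivity

theorem tendsto_integral_mul_comp_roundTheta (hg : Measurable g) (hgM : ∀ v, |g v| ≤ M)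
    {φ : (Fin d → ℝ) → ℝ} (hφ : Integrable φ) :
    Tendsto (fun n : ℕ => ∫ y, φ y * g (roundTheta ((n : ℝ) • y))) atTop
      (𝓝 ((∫ y, φ y) * ∫ v in centeredCube d, g v)) :=
  tendsto_sub_nhds_zero_iff.1 (tendsto_equidistDefect hg hgM hφ)

theorem tendsto_integral_comp_roundTheta_of_absolutelyContinuous (hg : Measurable g)
    (hgM : ∀ v, |g v| ≤ M) {ν : Measure (Fin d → ℝ)} [IsFiniteMeasure ν] (hν : ν ≪ volume) :
    Tendsto (fun n : ℕ => ∫ y, g (roundTheta ((n : ℝ) • y)) ∂ν) atTop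
      (𝓝 (ν.real univ * ∫ v in centeredCube d, g v)) := by
  have h := tendsto_integral_mul_comp_roundTheta hg hgM (Measure.integrable_toReal_rnDeriv (μ := ν))
  rw [Measure.integral_toReal_rnDeriv hν] at h
  simpa only [← smul_eq_mul, integral_rnDeriv_smul hν] using h

end Equidistribution

section RandomVariables

variable {Ω : Type*} [MeasurableSpace Ω] {P : Measure Ω} {d : ℕ}
  {Y : Ω → Fin d → ℝ} {M : ℝ}

lemma tendsto_setIntegral_comp_roundTheta [IsFiniteMeasure P] (hY : Measurable Y)
    (hac : P.map Y ≪ volume) (A : Set Ω) {g : (Fin d → ℝ) → ℝ} (hg : Measurable g)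
    (hgM : ∀ v, |g v| ≤ M) :
    Tendsto (fun n : ℕ => ∫ ω in A, g (roundTheta ((n : ℝ) • Y ω)) ∂P) atTop
      (𝓝 (P.real A * ∫ v in centeredCube d, g v)) := by
  have hacA : (P.restrict A).map Y ≪ volume :=
    (Measure.absolutelyContinuous_of_le (Measure.map_mono Measure.restrict_le_self hY)).trans hac
  have h := tendsto_integral_comp_roundTheta_of_absolutelyContinuous hg hgM hacA
  have hmass : ((P.restrict A).map Y).real univ = P.real A := by
    rw [measureReal_def, Measure.map_apply hY MeasurableSet.univ, preimage_univ,
      Measure.restrict_apply_univ, measureReal_def]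
  rw [hmass] at h
  refine h.congr fun n => integral_map hY.aemeasurable ?_
  exact (hg.comp ((measurable_roundTheta.comp (measurable_const_smul _)))).aestronglyMeasurable

variable {E : Type*} [MeasurableSpace E] {G : E → (Fin d → ℝ) → ℝ}

lemma integrable_comp_roundTheta [IsFiniteMeasure P] {X : Ω → E} (hX : Measurable X)
    (hY : Measurable Y) (hG : Measurable (Function.uncurry G)) (hGM : ∀ x v, |G x v| ≤ M) (n : ℕ) :
    Integrable (fun ω => G (X ω) (roundTheta ((n : ℝ) • Y ω))) P :=
  .of_bound (hG.comp (hX.prodMk (by fun_prop))).aestronglyMeasurable M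
    (Eventually.of_forall fun _ => hGM _ _)

lemma integrable_setIntegral_centeredCube [IsFiniteMeasure P] {X : Ω → E} (hX : Measurable X)
    (hG : Measurable (Function.uncurry G)) (hGM : ∀ x v, |G x v| ≤ M) :
    Integrable (fun ω => ∫ v in centeredCube d, G (X ω) v) P :=
  .of_bound (hG.stronglyMeasurable.integral_prod_right'.comp_measurable hX).aestronglyMeasurable M
    (Eventually.of_forall fun _ => abs_setIntegral_centeredCube_le (hGM _))

lemma tendsto_integral_simpleFunc_comp_roundTheta [IsFiniteMeasure P] (hY : Measurable Y)
    (hac : P.map Y ≪ volume) (s : SimpleFunc Ω E) (hG : Measurable (Function.uncurry G))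
    (hGM : ∀ x v, |G x v| ≤ M) :
    Tendsto (fun n : ℕ => ∫ ω, G (s ω) (roundTheta ((n : ℝ) • Y ω)) ∂P) atTop
      (𝓝 (∫ ω, (∫ v in centeredCube d, G (s ω) v) ∂P)) := by
  have hlim : ∫ ω, (∫ v in centeredCube d, G (s ω) v) ∂P =
      ∑ c ∈ s.range, P.real (s ⁻¹' {c}) * ∫ v in centeredCube d, G c v := by
    rw [s.integral_eq_sum_setIntegral_fiber (h := fun c _ => ∫ v in centeredCube d, G c v)
      (integrable_setIntegral_centeredCube s.measurable hG hGM)]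
    simp only [setIntegral_const, smul_eq_mul]
  rw [hlim]
  refine (tendsto_finsetSum _ fun c _ =>
    tendsto_setIntegral_comp_roundTheta hY hac _ hG.of_uncurry_left (hGM c)).congr fun n => ?_
  exact (s.integral_eq_sum_setIntegral_fiber (h := fun c ω => G c (roundTheta ((n : ℝ) • Y ω)))
    (integrable_comp_roundTheta s.measurable hY hG hGM n)).symm

theorem tendsto_integral_comp_roundTheta_of_lipschitz [IsFiniteMeasure P] [PseudoMetricSpace E]
    [BorelSpace E] [SecondCountableTopology E] {X : Ω → E} (hX : Measurable X)
    (hY : Measurable Y) (hac : P.map Y ≪ volume) (hG : Measurable (Function.uncurry G))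
    (hGM : ∀ x v, |G x v| ≤ M) {L : ℝ≥0} (hGL : ∀ x x' v, |G x v - G x' v| ≤ L * dist x x') :
    Tendsto (fun n : ℕ => ∫ ω, G (X ω) (roundTheta ((n : ℝ) • Y ω)) ∂P) atTop
      (𝓝 (∫ ω, (∫ v in centeredCube d, G (X ω) v) ∂P)) := by
  rcases isEmpty_or_nonempty Ω with hΩ | ⟨⟨ω₀⟩⟩
  · simp [Measure.eq_zero_of_isEmpty P]
  have hM : 0 ≤ 2 * M := by linarith [(abs_nonneg _).trans (hGM (X ω₀) 0)]
  set s : ℕ → SimpleFunc Ω E := SimpleFunc.approxOn X hX univ (X ω₀) (mem_univ _)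
  set b : ℕ → Ω → ℝ := fun j ω => min (2 * M) (L * dist (X ω) (s j ω))
  have hGb : ∀ j ω v, |G (X ω) v - G (s j ω) v| ≤ b j ω := fun j ω v =>
    le_min ((abs_sub _ _).trans (by linarith [hGM (X ω) v, hGM (s j ω) v])) (hGL _ _ _)
  have hb_int : ∀ j, Integrable (b j) P := fun j =>
    .of_bound (measurable_const.min ((hX.dist (s j).measurable).const_mul _)).aestronglyMeasurable
      (2 * M) (Eventually.of_forall fun ω => by
        rw [Real.norm_eq_abs, abs_of_nonneg (le_min hM (by positivity))]
        exact min_le_left _ _)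
  have hint : ∀ x, IntegrableOn (G x) (centeredCube d) := fun x =>
    Integrable.of_bound hG.of_uncurry_left.aestronglyMeasurable M (Eventually.of_forall (hGM x))
  refine tendsto_of_forall_approx (tendsto_integral_min_dist_approxOn (P := P) hX (X ω₀) hM L)
    (fun j => tendsto_integral_simpleFunc_comp_roundTheta hY hac (s j) hG hGM) (fun j n => ?_)
    (fun j => ?_)
  · rw [Real.dist_eq, ← integral_sub (integrable_comp_roundTheta hX hY hG hGM n)
      (integrable_comp_roundTheta (s j).measurable hY hG hGM n)]
    exact norm_integral_le_of_norm_le (f := fun ω => G (X ω) (roundTheta ((n : ℝ) • Y ω)) -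
      G (s j ω) (roundTheta ((n : ℝ) • Y ω))) (hb_int j) (Eventually.of_forall fun ω => hGb j ω _)
  · rw [Real.dist_eq, ← integral_sub (integrable_setIntegral_centeredCube hX hG hGM)
      (integrable_setIntegral_centeredCube (s j).measurable hG hGM)]
    refine norm_integral_le_of_norm_le (f := fun ω => (∫ v in centeredCube d, G (X ω) v) -
      ∫ v in centeredCube d, G (s j ω) v) (hb_int j) (Eventually.of_forall fun ω => ?_)
    rw [Real.norm_eq_abs, ← integral_sub (hint _) (hint _)]
    exact abs_setIntegral_centeredCube_le (hGb j ω)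

lemma integral_map_prod_centeredCube [IsFiniteMeasure P] {X : Ω → E} (hX : Measurable X)
    {ψ : (Fin d → ℝ) → ℝ} (hψ : Measurable ψ) {f : E × ℝ → ℝ} (hf : Measurable f) {C : ℝ}
    (hC : ∀ z, |f z| ≤ C) :
    ∫ z, f z ∂(((P.map X).prod (volume.restrict (centeredCube d))).map fun p => (p.1, ψ p.2)) =
      ∫ ω, (∫ v in centeredCube d, f (X ω, ψ v)) ∂P := by
  have hζ : Measurable fun p : E × (Fin d → ℝ) => (p.1, ψ p.2) :=
    measurable_fst.prodMk (hψ.comp measurable_snd)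
  have hfζ : Measurable fun p : E × (Fin d → ℝ) => f (p.1, ψ p.2) := hf.comp hζ
  rw [integral_map hζ.aemeasurable hf.aestronglyMeasurable,
    integral_prod (fun p => f (p.1, ψ p.2))
      (.of_bound hfζ.aestronglyMeasurable C (Eventually.of_forall fun _ => hC _)),
    integral_map hX.aemeasurable hfζ.stronglyMeasurable.integral_prod_right'.aestronglyMeasurable]

theorem tendsto_integral_prod_comp_roundTheta [IsProbabilityMeasure P] [PseudoMetricSpace E]
    [BorelSpace E] [SecondCountableTopology E] {X : Ω → E} (hX : Measurable X) (hY : Measurable Y)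
    (hac : P.map Y ≪ volume) {ψ : (Fin d → ℝ) → ℝ} (hψ : Measurable ψ)
    (F : BoundedContinuousFunction (E × ℝ) ℝ) :
    Tendsto (fun n : ℕ => ∫ ω, F (X ω, ψ (roundTheta ((n : ℝ) • Y ω))) ∂P) atTop
      (𝓝 (∫ ω, (∫ v in centeredCube d, F (X ω, ψ v)) ∂P)) := by
  obtain ⟨ω₀⟩ := nonempty_of_isProbabilityMeasure P
  have := Measure.isProbabilityMeasure_map (μ := P) hX.aemeasurable
  set Z : ℕ → Ω → E × ℝ := fun n ω => (X ω, ψ (roundTheta ((n : ℝ) • Y ω)))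
  have hZ : ∀ n, Measurable (Z n) := fun n => hX.prodMk (hψ.comp (by fun_prop))
  let μs : ℕ → ProbabilityMeasure (E × ℝ) :=
    fun n => ⟨P.map (Z n), Measure.isProbabilityMeasure_map (hZ n).aemeasurable⟩
  let μ : ProbabilityMeasure (E × ℝ) :=
    ⟨((P.map X).prod (volume.restrict (centeredCube d))).map fun p => (p.1, ψ p.2),
      Measure.isProbabilityMeasure_map
        (measurable_fst.prodMk (hψ.comp measurable_snd)).aemeasurable⟩
  have hμs : ∀ f : E × ℝ → ℝ, Measurable f →
      (fun n => ∫ z, f z ∂(μs n : Measure (E × ℝ))) = fun n => ∫ ω, f (Z n ω) ∂P :=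
    fun f hf => funext fun n => integral_map (hZ n).aemeasurable hf.aestronglyMeasurable
  have hconv : Tendsto μs atTop (𝓝 μ) := by
    refine tendsto_iff_forall_lipschitz_integral_tendsto.2 fun f ⟨C, hC⟩ ⟨L, hL⟩ => ?_
    have hbound : ∀ z, |f z| ≤ |f (Z 0 ω₀)| + C := fun z => by
      have := abs_sub_abs_le_abs_sub (f z) (f (Z 0 ω₀))
      rw [← Real.dist_eq] at this
      linarith [hC z (Z 0 ω₀)]
    rw [hμs f hL.continuous.measurable, ProbabilityMeasure.coe_mk,
      integral_map_prod_centeredCube hX hψ hL.continuous.measurable hbound]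
    refine tendsto_integral_comp_roundTheta_of_lipschitz hX hY hac
      (G := fun x v => f (x, ψ v)) (L := L)
      (hL.continuous.measurable.comp (measurable_fst.prodMk (hψ.comp measurable_snd)))
      (fun _ _ => hbound _) fun x x' v => ?_
    simpa [Real.dist_eq, Prod.dist_eq] using hL.dist_le_mul (x, ψ v) (x', ψ v)
  have h := ProbabilityMeasure.tendsto_iff_forall_integral_tendsto.1 hconv F
  rwa [hμs F F.continuous.measurable, ProbabilityMeasure.coe_mk,
    integral_map_prod_centeredCube hX hψ F.continuous.measurable fun z => F.norm_coe_le_norm z] at h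

end RandomVariables

theorem stmt8_general {Ω : Type*} [MeasurableSpace Ω] (P : Measure Ω) [IsProbabilityMeasure P]
    {d m : ℕ} (Y : Ω → (Fin d → ℝ)) (X : Ω → (Fin m → ℝ))
    (hY : Measurable Y) (hX : Measurable X)
    (hac : P.map Y ≪ (volume : Measure (Fin d → ℝ)))
    (Yn : ℕ → Ω → (Fin d → ℝ))
    (hYn : ∀ n ω, Yn n ω = Y ω + (1 / (n:ℝ)) • roundTheta ((n:ℝ) • Y ω))
    (ψ : (Fin d → ℝ) → ℝ) (hψmeas : Measurable ψ) :
    ∀ F : BoundedContinuousFunction ((Fin m → ℝ) × ℝ) ℝ,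
      Tendsto (fun n : ℕ => ∫ ω, F (X ω, ψ ((n:ℝ) • (Yn n ω - Y ω))) ∂P)
        atTop
        (nhds (∫ ω, (∫ v in Set.univ.pi fun _ : Fin d => Set.Ioo (-(1/2) : ℝ) (1/2),
          F (X ω, ψ v)) ∂P)) := by
  intro F
  refine (tendsto_integral_prod_comp_roundTheta hX hY hac hψmeas F).congr' ?_
  filter_upwards [eventually_ne_atTop 0] with n hn
  congr with ω
  rw [hYn, add_sub_cancel_left, smul_smul, mul_one_div_cancel (Nat.cast_ne_zero.2 hn), one_smul]

/-- If the law of `Y` is absolutely continuous w.r.t. Lebesgue measure,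
`Y_n = Y + (1/n)θ(nY)`, and `ψ ∈ L¹([−1/2,1/2]^d)`, then `(X, ψ(n(Y_n − Y)))`
converges in law to `(X, ψ(V))` with `V` uniform on `(−1/2,1/2)^d` independent of `X`. -/
theorem stmt8 {Ω : Type*} [MeasurableSpace Ω] (P : Measure Ω) [IsProbabilityMeasure P]
    {d m : ℕ} (Y : Ω → (Fin d → ℝ)) (X : Ω → (Fin m → ℝ))
    (hY : Measurable Y) (hX : Measurable X)
    (hac : P.map Y ≪ (volume : Measure (Fin d → ℝ)))
    (Yn : ℕ → Ω → (Fin d → ℝ))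
    (hYn : ∀ n ω, Yn n ω = Y ω + (1 / (n:ℝ)) • roundTheta ((n:ℝ) • Y ω))
    (ψ : (Fin d → ℝ) → ℝ) (hψmeas : Measurable ψ)
    (hψ : IntegrableOn ψ (Set.univ.pi fun _ : Fin d => Set.Icc (-(1/2) : ℝ) (1/2))) :
    ∀ F : BoundedContinuousFunction ((Fin m → ℝ) × ℝ) ℝ,
      Tendsto (fun n : ℕ => ∫ ω, F (X ω, ψ ((n:ℝ) • (Yn n ω - Y ω))) ∂P)
        atTop
        (nhds (∫ ω, (∫ v in Set.univ.pi fun _ : Fin d => Set.Ioo (-(1/2) : ℝ) (1/2),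
          F (X ω, ψ v)) ∂P)) :=
  stmt8_general P Y X hY hX hac Yn hYn ψ hψmeas
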